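/- Given reals p > 0, q, a, a′ and b > 0, b′ > 0, define h(ξ) = (−q + (ξ/2)·a′ + (1/(2ξ))·a) / (p + (ξ/2)·b′ + (1/(2ξ))·b) for ξ > 0, and set γ = p·a + q·b, γ′ = p·a′ + q·b′, ω = (a·b′ − a′·b)/2. If γ < 0 and γ′ < 0, then ξ₋ := (ω − √(ω² + γ′γ)) / γ′ satisfies ξ₋ > 0 and h(ξ₋) ≥ h(ξ) for every ξ > 0, i.e. ξ₋ is a global maximum point of h on (0, ∞). (This is the content of Eq. (15) (sol1) in Proposition 3: for each squeezing phase φ with p(φ) true, the squeezing factor ξ̄(φ) = ξ₋(φ) maximizes the teleportation fidelity.) -/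

import Mathlib

/-!
Clearing the common factor `1/(2ξ)` writes `h` as a ratio `N(ξ)/D(ξ)` of quadratics with
`D > 0`, and `N(ξ) D(t) - N(t) D(ξ) = 2 (ξ - t) (γ' ξ t - ω (ξ + t) - γ)`. When `t` is a root of
`γ' t² - 2 ω t - γ` (the numerator of `h'`), the second factor becomes `(ξ - t)(γ' t - ω)`, so
`h(ξ) ≤ h(t)` for all `ξ > 0` as soon as `γ' t ≤ ω`. For `ξ₋` one has `γ' ξ₋ - ω = -√(ω² + γ'γ)`,
and `γ, γ' < 0` make `ω - √(ω² + γ'γ)` negative, hence `ξ₋ > 0`.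
-/

/-- The function `h(ξ) = (−q + (ξ/2)a′ + (1/(2ξ))a) / (p + (ξ/2)b′ + (1/(2ξ))b)`
whose maximization over the squeezing factor `ξ` is equivalent to the maximization of the
teleportation fidelity `F(ξ,φ) = [det Γ^tr − h(ξ)]^(−1/2)`. -/
noncomputable def hfun (p q a a' b b' : ℝ) (ξ : ℝ) : ℝ :=
  (-q + (ξ/2) * a' + (1/(2*ξ)) * a) / (p + (ξ/2) * b' + (1/(2*ξ)) * b)

theorem hfun_eq_div (p q a a' b b' : ℝ) {x : ℝ} (hx : x ≠ 0) :
    hfun p q a a' b b' x = (a' * x ^ 2 - 2 * q * x + a) / (b' * x ^ 2 + 2 * p * x + b) := by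
  have h2x : 2 * x ≠ 0 := mul_ne_zero two_ne_zero hx
  have hN : -q + x / 2 * a' + 1 / (2 * x) * a = (a' * x ^ 2 - 2 * q * x + a) / (2 * x) := by
    field_simp
    ring
  have hD : p + x / 2 * b' + 1 / (2 * x) * b = (b' * x ^ 2 + 2 * p * x + b) / (2 * x) := by
    field_simp
    ring
  rw [hfun, hN, hD, div_div_div_cancel_right₀ h2x]

theorem quadratic_cross_sub (p q a a' b b' x t : ℝ) :
    (a' * x ^ 2 - 2 * q * x + a) * (b' * t ^ 2 + 2 * p * t + b)
      - (a' * t ^ 2 - 2 * q * t + a) * (b' * x ^ 2 + 2 * p * x + b)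
      = 2 * (x - t) * ((p * a' + q * b') * x * t - (a * b' - a' * b) / 2 * (x + t)
          - (p * a + q * b)) := by
  ring

theorem hfun_le_hfun_of_root {p q a a' b b' t x : ℝ} (hp : 0 < p) (hb : 0 < b) (hb' : 0 < b')
    (ht : 0 < t) (hroot : (p * a' + q * b') * t ^ 2 - (a * b' - a' * b) * t - (p * a + q * b) = 0)
    (hle : (p * a' + q * b') * t ≤ (a * b' - a' * b) / 2) (hx : 0 < x) :
    hfun p q a a' b b' x ≤ hfun p q a a' b b' t := by
  rw [hfun_eq_div _ _ _ _ _ _ hx.ne', hfun_eq_div _ _ _ _ _ _ ht.ne',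
    div_le_div_iff₀ (by positivity) (by positivity), ← sub_nonpos, quadratic_cross_sub]
  have hfactor : (p * a' + q * b') * x * t - (a * b' - a' * b) / 2 * (x + t) - (p * a + q * b)
      = (x - t) * ((p * a' + q * b') * t - (a * b' - a' * b) / 2) := by
    linear_combination hroot
  rw [hfactor, ← mul_assoc, mul_assoc 2, ← sq]
  exact mul_nonpos_of_nonneg_of_nonpos (by positivity) (sub_nonpos.mpr hle)

/-- Eq. (15) (sol1) of Proposition 3: if `γ = p a + q b < 0` and `γ′ = p a′ + q b′ < 0`, then
`ξ₋ = (ω − √(ω² + γ′γ))/γ′` is positive and is a global maximum point of `h` on `(0,∞)`. -/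
theorem xi_minus_global_max (p q a a' b b' : ℝ)
    (hp : 0 < p) (hb : 0 < b) (hb' : 0 < b')
    (hγ : p * a + q * b < 0) (hγ' : p * a' + q * b' < 0) :
    let γ := p * a + q * b
    let γ' := p * a' + q * b'
    let ω := (a * b' - a' * b) / 2
    let ξm := (ω - Real.sqrt (ω ^ 2 + γ' * γ)) / γ'
    0 < ξm ∧ ∀ ξ > 0, hfun p q a a' b b' ξ ≤ hfun p q a a' b b' ξm := by
  intro γ γ' ω ξm
  set s := Real.sqrt (ω ^ 2 + γ' * γ)
  have hγγ' : 0 < γ' * γ := mul_pos_of_neg_of_neg hγ' hγ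
  have hs_sq : s ^ 2 = ω ^ 2 + γ' * γ := Real.sq_sqrt (by positivity)
  have hω_lt_s : ω < s := Real.lt_sqrt_of_sq_lt (by linarith)
  have hξm_pos : 0 < ξm := div_pos_of_neg_of_neg (by linarith) hγ'
  have hγ'ξm : γ' * ξm = ω - s := mul_div_cancel₀ _ hγ'.ne
  have hroot : γ' * ξm ^ 2 - (a * b' - a' * b) * ξm - γ = 0 := by
    have hscaled : γ' * (γ' * ξm ^ 2 - 2 * ω * ξm - γ) = 0 := by
      linear_combination (γ' * ξm - ω - s) * hγ'ξm + hs_sq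
    have h2ω : 2 * ω = a * b' - a' * b := by ring
    rw [← h2ω]
    exact (mul_eq_zero.mp hscaled).resolve_left hγ'.ne
  refine ⟨hξm_pos, fun ξ hξ => hfun_le_hfun_of_root hp hb hb' hξm_pos hroot ?_ hξ⟩
  show γ' * ξm ≤ ω
  linarith [Real.sqrt_nonneg (ω ^ 2 + γ' * γ)]
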